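/- Let G be a finite simple connected graph with monitors m1 and m2, and let e = m1u be an edge of G incident to the monitor m1 whose other endpoint u is not m2. Then e is unidentifiable: there exist two positive weight functions on the edges of G that assign equal metrics to every simple path from m1 to m2 but assign different weights to e. -/

import Mathlib

/-!
A simple path from `m1` to `m2` uses exactly one edge at `m1` and exactly one edge at `m2`.
Hence raising the weight of every edge at `m1` by `1/2` and lowering the weight of every
edge at `m2` by `1/2` (starting from unit weights) changes no path metric, but changes the
weight of `m1 u` when `u ≠ m2`.
-/

section

variable {V : Type*} [DecidableEq V]

def starWeight (a : V) (ε : ℝ) (e : Sym2 V) : ℝ :=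
  if a ∈ e then ε else 0

namespace SimpleGraph.Walk

variable {G : SimpleGraph V}

lemma sum_edges_starWeight_of_notMem_support {c d a : V} (p : G.Walk c d)
    (ha : a ∉ p.support) (ε : ℝ) : (p.edges.map (starWeight a ε)).sum = 0 :=
  List.sum_eq_zero fun x hx => by
    obtain ⟨e, he, rfl⟩ := List.mem_map.mp hx
    exact if_neg fun hae => ha (mem_support_of_mem_edges he hae)

lemma IsPath.sum_edges_starWeight_start {a b : V} {p : G.Walk a b} (hp : p.IsPath)
    (hab : a ≠ b) (ε : ℝ) : (p.edges.map (starWeight a ε)).sum = ε := by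
  cases p with
  | nil => exact absurd rfl hab
  | cons _ q =>
    rw [cons_isPath_iff] at hp
    simp only [edges_cons, List.map_cons, List.sum_cons,
      sum_edges_starWeight_of_notMem_support q hp.2, starWeight, if_pos (Sym2.mem_mk_left _ _),
      add_zero]

lemma IsPath.sum_edges_starWeight_end {a b : V} {p : G.Walk a b} (hp : p.IsPath)
    (hab : a ≠ b) (ε : ℝ) : (p.edges.map (starWeight b ε)).sum = ε := by
  simpa only [edges_reverse, List.map_reverse, List.sum_reverse] using
    hp.reverse.sum_edges_starWeight_start hab.symm ε

lemma IsPath.sum_edges_add_starWeight_add_starWeight_neg {a b : V} {p : G.Walk a b}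
    (hp : p.IsPath) (hab : a ≠ b) (w : Sym2 V → ℝ) (ε : ℝ) :
    (p.edges.map fun e => w e + starWeight a ε e + starWeight b (-ε) e).sum =
      (p.edges.map w).sum := by
  rw [List.sum_map_add, List.sum_map_add, hp.sum_edges_starWeight_start hab,
    hp.sum_edges_starWeight_end hab, add_neg_cancel_right]

end SimpleGraph.Walk

end

theorem exterior_link_unidentifiable_general {V : Type*}
    (G : SimpleGraph V)
    (m1 m2 : V) (hm : m1 ≠ m2)
    (u : V) (hu : u ≠ m2) :
    ∃ w1 w2 : Sym2 V → ℝ,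
      (∀ e ∈ G.edgeSet, 0 < w1 e) ∧ (∀ e ∈ G.edgeSet, 0 < w2 e) ∧
      (∀ p : G.Walk m1 m2, p.IsPath →
        (p.edges.map w1).sum = (p.edges.map w2).sum) ∧
      w1 s(m1, u) ≠ w2 s(m1, u) := by
  classical
  refine ⟨fun _ => 1, fun e => 1 + starWeight m1 (1 / 2) e + starWeight m2 (-(1 / 2)) e,
    fun _ _ => one_pos, fun e _ => ?_, fun p hp => ?_, ?_⟩
  · simp only [starWeight]
    split_ifs <;> norm_num
  · exact (hp.sum_edges_add_starWeight_add_starWeight_neg hm _ _).symm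
  · have hm2 : m2 ∉ s(m1, u) := by simp [hm.symm, hu.symm]
    simp only [starWeight, if_pos (Sym2.mem_mk_left m1 u), if_neg hm2]
    norm_num

/-- Any edge `m1 u` incident to the monitor `m1` whose other endpoint
`u` is not the other monitor `m2` is unidentifiable. -/
theorem exterior_link_unidentifiable {V : Type*} [Fintype V]
    (G : SimpleGraph V) (hG : G.Connected)
    (m1 m2 : V) (hm : m1 ≠ m2)
    (u : V) (hadj : G.Adj m1 u) (hu : u ≠ m2) :
    ∃ w1 w2 : Sym2 V → ℝ,
      (∀ e ∈ G.edgeSet, 0 < w1 e) ∧ (∀ e ∈ G.edgeSet, 0 < w2 e) ∧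
      (∀ p : G.Walk m1 m2, p.IsPath →
        (p.edges.map w1).sum = (p.edges.map w2).sum) ∧
      w1 s(m1, u) ≠ w2 s(m1, u) :=
  exterior_link_unidentifiable_general G m1 m2 hm u hu
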